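/- Let G be the tree in which every vertex has countably infinite degree, and let H = G ⊔ G be the disjoint union of two copies of G. Then every bijection from V(G) to V(H) is a hypomorphism between G and H, but G and H are not isomorphic; in particular, G is an infinite tree that is not reconstructible. -/

import Mathlib

/-!
Root an ℵ₀-regular tree at a vertex `r`. Every vertex other than `r` has exactly one neighbour
closer to `r` (two of them would give two paths from `r`), so every vertex has `ℵ₀` children;
enumerating the children of each vertex by `ℕ` identifies the tree with the tree of finite
sequences of naturals, and so identifies every forest with ℵ₀-regular components with a disjoint
union of copies of that tree. Deleting a vertex `v` from the tree leaves one component for each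
neighbour of `v`, i.e. `ℵ₀` copies; deleting a vertex from `G ⊔ G` leaves these `ℵ₀` copies
plus one more, again `ℵ₀` copies. But `G` is connected and `G ⊔ G` is not.
-/

open Cardinal

theorem Cardinal.nonempty_nat_equiv_of_mk_eq_aleph0 {α : Type*} (h : #α = ℵ₀) :
    Nonempty (ℕ ≃ α) :=
  ⟨(@Denumerable.eqv _ (denumerable_iff.2 h).some).symm⟩

theorem Cardinal.mk_diff_eq_aleph0 {α : Type*} {s t : Set α} (hs : #s = ℵ₀) (ht : t.Finite) :
    #(s \ t : Set α) = ℵ₀ := by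
  have : Countable (s \ t : Set α) :=
    (Set.countable_coe_iff.1 (mk_le_aleph0_iff.1 hs.le)).mono Set.sdiff_subset |>.to_subtype
  have : Infinite (s \ t : Set α) :=
    ((Set.infinite_coe_iff.1 (infinite_iff.2 hs.ge)).sdiff ht).to_subtype
  exact mk_eq_aleph0 _

namespace SimpleGraph

variable {V : Type*} {G : SimpleGraph V}

-- `[]` is the root and `n :: l` is the `n`-th child of `l`.
def listTree : SimpleGraph (List ℕ) where
  Adj l m := (∃ n, l = n :: m) ∨ (∃ n, m = n :: l)
  symm := ⟨fun _ _ ↦ Or.symm⟩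
  loopless := ⟨fun l h ↦ by
    rcases h with ⟨n, h⟩ | ⟨n, h⟩ <;> simpa using congrArg List.length h⟩

def listForest (ι : Type*) : SimpleGraph (ι × List ℕ) where
  Adj x y := x.1 = y.1 ∧ listTree.Adj x.2 y.2
  symm := ⟨fun _ _ h ↦ ⟨h.1.symm, h.2.symm⟩⟩
  loopless := ⟨fun x h ↦ listTree.loopless.irrefl x.2 h.2⟩

def listForestCongr {ι κ : Type*} (e : ι ≃ κ) : listForest ι ≃g listForest κ where
  toEquiv := e.prodCongr (Equiv.refl _)
  map_rel_iff' := and_congr_left' e.apply_eq_iff_eq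

def listForestSumIso (ι κ : Type*) : listForest ι ⊕g listForest κ ≃g listForest (ι ⊕ κ) where
  toEquiv := (Equiv.sumProdDistrib ι κ (List ℕ)).symm
  map_rel_iff' {x y} := by
    rcases x with ⟨i, l⟩ | ⟨i, l⟩ <;> rcases y with ⟨j, m⟩ | ⟨j, m⟩ <;> simp [listForest]

section RootedTree

def childSet (G : SimpleGraph V) (r u : V) : Set V :=
  {w | G.Adj u w ∧ G.dist r w = G.dist r u + 1}

variable {r u u' v : V}

lemma Reachable.exists_mem_childSet (h : G.Reachable r v) (hv : v ≠ r) :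
    ∃ u, v ∈ G.childSet r u := by
  obtain ⟨p, -, hp⟩ := h.symm.exists_path_of_dist
  obtain ⟨u, hvu, q, rfl⟩ := Walk.exists_eq_cons_of_ne hv p
  have hq : G.dist r u ≤ q.length := dist_comm (G := G) ▸ dist_le q
  have htri : G.dist r v ≤ G.dist r u + G.dist u v := hvu.symm.reachable.dist_triangle_right r
  rw [Walk.length_cons, dist_comm] at hp
  rw [dist_eq_one_iff_adj.2 hvu.symm] at htri
  exact ⟨u, hvu.symm, by omega⟩

lemma exists_isPath_concat_of_mem_childSet (hu : v ∈ G.childSet r u) :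
    ∃ p : G.Walk r u, (p.concat hu.1).IsPath := by
  have hr : G.Reachable r u :=
    (Reachable.of_dist_ne_zero (by rw [hu.2]; omega)).trans hu.1.symm.reachable
  obtain ⟨p, hp⟩ := hr.exists_walk_length_eq_dist
  exact ⟨p, (p.concat hu.1).isPath_of_length_eq_dist (by rw [Walk.length_concat, hp, hu.2])⟩

lemma IsAcyclic.eq_of_mem_childSet (hG : G.IsAcyclic) (hu : v ∈ G.childSet r u)
    (hu' : v ∈ G.childSet r u') : u = u' := by
  obtain ⟨p, hp⟩ := exists_isPath_concat_of_mem_childSet hu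
  obtain ⟨p', hp'⟩ := exists_isPath_concat_of_mem_childSet hu'
  have hpp' := (hG.subsingleton_path r v).elim ⟨_, hp⟩ ⟨_, hp'⟩
  exact (Walk.concat_inj (congrArg Subtype.val hpp')).1

-- The neighbours of `u` that are not its children are its parents, of which there is at most one.
lemma IsTree.mk_childSet (hG : G.IsTree) (r : V) (hu : #(G.neighborSet u) = ℵ₀) :
    #(G.childSet r u) = ℵ₀ := by
  have hparent : {w | u ∈ G.childSet r w}.Subsingleton := fun _ hw _ hw' ↦
    hG.isAcyclic.eq_of_mem_childSet hw hw'
  have hchild : G.childSet r u = G.neighborSet u \ {w | u ∈ G.childSet r w} := by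
    ext w
    simp only [childSet, Set.mem_sdiff, mem_neighborSet, Set.mem_ofPred_eq, not_and]
    refine ⟨fun h ↦ ⟨h.1, fun _ ↦ by omega⟩, fun ⟨hw, h⟩ ↦ ⟨hw, ?_⟩⟩
    have := h hw.symm
    have := hG.dist_eq_dist_add_one_of_adj r hw
    omega
  rw [hchild]
  exact mk_diff_eq_aleph0 hu hparent.finite

end RootedTree

section Descend

variable (r : V) (c : ∀ u, ℕ ≃ G.childSet r u)

def descend : List ℕ → V
  | [] => r
  | n :: l => c (descend l) n

lemma descend_cons_mem_childSet (n : ℕ) (l : List ℕ) :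
    descend r c (n :: l) ∈ G.childSet r (descend r c l) :=
  (c _ n).2

lemma dist_descend (l : List ℕ) : G.dist r (descend r c l) = l.length := by
  induction l with
  | nil => exact dist_self
  | cons n l ih => rw [(descend_cons_mem_childSet r c n l).2, ih, List.length_cons]

variable {r c}

lemma IsAcyclic.descend_injective (hG : G.IsAcyclic) : Function.Injective (descend r c) := by
  intro l₁ l₂ h
  induction l₁ generalizing l₂ with
  | nil =>
    cases l₂ with
    | nil => rfl
    | cons m l₂ => simpa [dist_descend] using congrArg (G.dist r) h
  | cons n l₁ ih =>
    cases l₂ with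
    | nil => simpa [dist_descend] using congrArg (G.dist r) h
    | cons m l₂ =>
      obtain rfl : l₁ = l₂ := ih <| hG.eq_of_mem_childSet (descend_cons_mem_childSet r c n l₁)
        (h ▸ descend_cons_mem_childSet r c m l₂)
      rw [(c _).injective (Subtype.ext h)]

lemma Connected.descend_surjective (hG : G.Connected) : Function.Surjective (descend r c) := by
  suffices ∀ k v, G.dist r v = k → ∃ l, descend r c l = v from fun v ↦ this _ v rfl
  intro k
  induction k with
  | zero => exact fun v hv ↦ ⟨[], hG.dist_eq_zero_iff.1 hv⟩
  | succ k ih =>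
    intro v hv
    obtain ⟨u, hu⟩ := (hG r v).exists_mem_childSet (by rintro rfl; simp at hv)
    obtain ⟨l, rfl⟩ := ih u (by rw [hu.2] at hv; omega)
    exact ⟨(c _).symm ⟨v, hu⟩ :: l, by simp [descend]⟩

lemma IsAcyclic.eq_cons_of_descend_mem_childSet (hG : G.IsAcyclic) {l₁ l₂ : List ℕ}
    (h : descend r c l₂ ∈ G.childSet r (descend r c l₁)) : ∃ n, l₂ = n :: l₁ := by
  cases l₂ with
  | nil => simpa [dist_descend] using h.2
  | cons n l₂ =>
    have hl := hG.eq_of_mem_childSet (descend_cons_mem_childSet r c n l₂) h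
    exact ⟨n, by rw [hG.descend_injective hl]⟩

lemma IsTree.adj_descend_iff (hG : G.IsTree) {l₁ l₂ : List ℕ} :
    G.Adj (descend r c l₁) (descend r c l₂) ↔ listTree.Adj l₁ l₂ := by
  refine ⟨fun h ↦ ?_, ?_⟩
  · rcases hG.dist_eq_dist_add_one_of_adj r h with h' | h'
    · exact .inl (hG.isAcyclic.eq_cons_of_descend_mem_childSet ⟨h.symm, h'⟩)
    · exact .inr (hG.isAcyclic.eq_cons_of_descend_mem_childSet ⟨h, h'⟩)
  · rintro (⟨n, rfl⟩ | ⟨n, rfl⟩)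
    · exact (descend_cons_mem_childSet r c n l₂).1.symm
    · exact (descend_cons_mem_childSet r c n l₁).1

end Descend

theorem IsTree.nonempty_iso_listTree (hG : G.IsTree) (hdeg : ∀ v, #(G.neighborSet v) = ℵ₀) :
    Nonempty (G ≃g listTree) := by
  obtain ⟨r⟩ := hG.connected.nonempty
  have c (u : V) : ℕ ≃ G.childSet r u :=
    (nonempty_nat_equiv_of_mk_eq_aleph0 (hG.mk_childSet r (hdeg u))).some
  let e := Equiv.ofBijective (descend r c)
    ⟨hG.isAcyclic.descend_injective, hG.connected.descend_surjective⟩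
  exact ⟨(⟨e, hG.adj_descend_iff⟩ : listTree ≃g G).symm⟩

lemma mk_neighborSet_induce (s : Set V) (v : s) :
    #((G.induce s).neighborSet v) = #(G.neighborSet v ∩ s : Set V) := by
  rw [neighborSet_induce, ← mk_image_eq Subtype.val_injective, Subtype.image_preimage_coe,
    Set.inter_comm]

theorem IsAcyclic.nonempty_iso_listForest (hG : G.IsAcyclic)
    (hdeg : ∀ v, #(G.neighborSet v) = ℵ₀) : Nonempty (G ≃g listForest G.ConnectedComponent) := by
  have ψ (C : G.ConnectedComponent) : C.toSimpleGraph ≃g listTree := by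
    refine ((hG.isTree_connectedComponent C).nonempty_iso_listTree fun v ↦ ?_).some
    have hN : G.neighborSet v ⊆ C.supp := fun _ ↦ C.mem_supp_of_adj_mem_supp v.2
    rw [ConnectedComponent.toSimpleGraph, mk_neighborSet_induce, Set.inter_eq_left.2 hN, hdeg]
  have hψ {u v : V} (C C' : G.ConnectedComponent) (hu : u ∈ C) (hv : v ∈ C') (h : C = C') :
      listTree.Adj (ψ C ⟨u, hu⟩) (ψ C' ⟨v, hv⟩) ↔ G.Adj u v := by
    subst h
    exact (ψ C).map_adj_iff.trans (C.toSimpleGraph_adj hu hv)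
  let e : V ≃ G.ConnectedComponent × List ℕ :=
    (Equiv.sigmaFiberEquiv G.connectedComponentMk).symm.trans
      ((Equiv.sigmaCongrRight fun C ↦ (ψ C).toEquiv).trans (Equiv.sigmaEquivProd _ _))
  refine ⟨⟨e, fun {u v} ↦ ⟨fun h ↦ (hψ _ _ _ _ h.1).1 h.2, fun h ↦ ?_⟩⟩⟩
  have hC := ConnectedComponent.sound h.reachable
  exact ⟨hC, (hψ _ _ _ _ hC).2 h⟩

section DeleteVertex

lemma mk_neighborSet_induce_compl_singleton {v : V} (x : ({v}ᶜ : Set V))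
    (hx : #(G.neighborSet x) = ℵ₀) : #((G.induce {v}ᶜ).neighborSet x) = ℵ₀ := by
  rw [mk_neighborSet_induce, ← Set.sdiff_eq]
  exact mk_diff_eq_aleph0 hx (Set.finite_singleton v)

lemma IsTree.bijective_connectedComponentMk_induce_compl (hG : G.IsTree) (v : V) :
    Function.Bijective fun u : G.neighborSet v ↦
      (G.induce {v}ᶜ).connectedComponentMk ⟨u, (G.ne_of_adj u.2).symm⟩ := by
  refine ⟨fun ⟨u₁, h₁⟩ ⟨u₂, h₂⟩ h ↦ ?_, fun C ↦ ?_⟩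
  · -- a path from `u₁` to `u₂` avoiding `v`, followed by the edge `u₂v`, is a path from `u₁`
    -- to `v`, so it must be the edge `u₁v`
    classical
    obtain ⟨w⟩ := ConnectedComponent.exact h
    let w' := w.map (Embedding.induce {v}ᶜ).toHom
    have hv : v ∉ w'.toPath.1.support := fun hv ↦ by
      obtain ⟨x, -, hx⟩ :=
        List.mem_map.1 (Walk.support_map _ w ▸ w'.support_toPath_subset_support hv)
      exact x.2 hx
    have hpath := (hG.isAcyclic.subsingleton_path u₁ v).elim
      ⟨_, w'.toPath.2.concat hv h₂.symm⟩ (Path.singleton h₁.symm)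
    exact Subtype.ext (Walk.concat_inj (p' := Walk.nil) (congrArg Subtype.val hpath)).1.symm
  · obtain ⟨⟨x, hx⟩, rfl⟩ := C.exists_rep
    obtain ⟨p, hp⟩ := hG.connected.exists_isPath v x
    obtain ⟨u, hvu, q, rfl⟩ := Walk.exists_eq_cons_of_ne (Ne.symm hx) p
    have hq : ∀ y ∈ q.support, y ∈ ({v}ᶜ : Set V) := fun y hy hyv ↦
      (Walk.cons_isPath_iff _ _).1 hp |>.2 (hyv ▸ hy)
    exact ⟨⟨u, hvu⟩, ConnectedComponent.sound ⟨q.induce _ hq⟩⟩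

theorem IsTree.nonempty_iso_induce_compl_singleton (hG : G.IsTree)
    (hdeg : ∀ v, #(G.neighborSet v) = ℵ₀) (v : V) :
    Nonempty (G.induce {v}ᶜ ≃g listForest ℕ) := by
  obtain ⟨e⟩ := (hG.isAcyclic.induce _).nonempty_iso_listForest fun x ↦
    mk_neighborSet_induce_compl_singleton x (hdeg x)
  obtain ⟨eN⟩ := nonempty_nat_equiv_of_mk_eq_aleph0 (hdeg v)
  let eC := Equiv.ofBijective _ (hG.bijective_connectedComponentMk_induce_compl v)
  exact ⟨e.trans (listForestCongr (eC.symm.trans eN.symm))⟩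

def induceComplInlIso {W : Type*} (G : SimpleGraph V) (H : SimpleGraph W) (v : V) :
    (G ⊕g H).induce {Sum.inl v}ᶜ ≃g G.induce {v}ᶜ ⊕g H where
  toEquiv := Equiv.subtypeSum.trans <| Equiv.sumCongr
    (Equiv.subtypeEquivRight fun _ ↦ by simp) (Equiv.subtypeUnivEquiv fun _ ↦ Sum.inr_ne_inl)
  map_rel_iff' {x y} := by
    rcases x with ⟨x | x, hx⟩ <;> rcases y with ⟨y | y, hy⟩ <;> rfl

def Iso.induceComplSingleton {W : Type*} {H : SimpleGraph W} (e : G ≃g H) (v : V) :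
    G.induce {v}ᶜ ≃g H.induce {e v}ᶜ where
  toEquiv := e.toEquiv.subtypeEquiv fun _ ↦ by simp
  map_rel_iff' := by simp [e.map_adj_iff]

theorem IsTree.nonempty_iso_sum_induce_compl_singleton (hG : G.IsTree)
    (hdeg : ∀ v, #(G.neighborSet v) = ℵ₀) (x : V ⊕ V) :
    Nonempty ((G ⊕g G).induce {x}ᶜ ≃g listForest ℕ) := by
  have : Nonempty V := hG.connected.nonempty
  have := hG.connected.preconnected.subsingleton_connectedComponent
  obtain ⟨eG⟩ := hG.isAcyclic.nonempty_iso_listForest hdeg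
  have hinl (w : V) : Nonempty ((G ⊕g G).induce {Sum.inl w}ᶜ ≃g listForest ℕ) := by
    obtain ⟨e⟩ := hG.nonempty_iso_induce_compl_singleton hdeg w
    exact ⟨(induceComplInlIso G G w).trans <|
      (e.sumCongr (eG.trans (listForestCongr Equiv.punitOfNonemptyOfSubsingleton))).trans <|
        (listForestSumIso ℕ Unit).trans (listForestCongr Equiv.natSumPUnitEquivNat)⟩
  rcases x with w | w
  · exact hinl w
  · exact ⟨(Iso.sumComm.induceComplSingleton (Sum.inr w)).trans (hinl w).some⟩

end DeleteVertex

end SimpleGraph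

/-- Let `G` be the tree in which every vertex has countably infinite degree, and let
`H = G ⊔ G` be the disjoint union of two copies of `G`. Then there is a bijection from
`V(G)` to `V(H)`, every such bijection is a hypomorphism between `G` and `H`, yet `G`
and `H` are not isomorphic; in particular, `G` is an infinite tree that is not
reconstructible. -/
theorem aleph0_regular_tree_not_reconstructible
    {V : Type} (G : SimpleGraph V) (hT : G.IsTree)
    (hdeg : ∀ v : V, Cardinal.mk ↥(G.neighborSet v) = Cardinal.aleph0) :
    Infinite V ∧
    Nonempty (V ≃ (V ⊕ V)) ∧
    (∀ φ : V ≃ (V ⊕ V), ∀ v : V,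
      Nonempty ((G.induce ({v}ᶜ : Set V)) ≃g
        ((G ⊕g G).induce ({φ v}ᶜ : Set (V ⊕ V))))) ∧
    IsEmpty (G ≃g (G ⊕g G)) := by
  obtain ⟨r⟩ := hT.connected.nonempty
  have : Infinite V := infinite_iff.2 ((hdeg r).ge.trans (mk_set_le _))
  refine ⟨this, Cardinal.eq.1 ?_, fun φ v ↦ ?_, ⟨fun e ↦ ?_⟩⟩
  · rw [mk_sum, lift_id, add_eq_self (aleph0_le_mk V)]
  · obtain ⟨eG⟩ := hT.nonempty_iso_induce_compl_singleton hdeg v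
    obtain ⟨eH⟩ := hT.nonempty_iso_sum_induce_compl_singleton hdeg (φ v)
    exact ⟨eG.trans eH.symm⟩
  · exact SimpleGraph.not_connected_sum (e.connected_iff.1 hT.connected)
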